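/- Let 1 < p < ∞ and 1 < r ≤ p. For any two positive differentiable functions u, v on an open set Ω ⊂ ℝ^N, the pointwise inequality [∇u]^{p-1} · ∇( (u^r - v^r)/u^{r-1} ) + [∇v]^{p-1} · ∇( (v^r - u^r)/v^{r-1} ) ≥ 0 holds for all x ∈ Ω, where [ξ]^{p-1} := |ξ|^{p-2} ξ for vectors ξ. -/

import Mathlib

open MeasureTheory
open scoped RealInnerProductSpace

noncomputable section

abbrev Euc (N : ℕ) := EuclideanSpace ℝ (Fin N)

/-- For a vector `ξ`, `[ξ]^{p-1} := |ξ|^{p-2} ξ`. -/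
def vecPow {N : ℕ} (p : ℝ) (ξ : Euc N) : Euc N := ‖ξ‖ ^ (p - 2) • ξ

/-!
Write `t = v/u`. Where `u > 0`, `(u^r - v^r)/u^{r-1} = u - v^r u^{1-r}`, whose gradient is
`(1 + (r-1) t^r) ∇u - r t^{r-1} ∇v`. Pairing with `[∇u]^{p-1}`, Cauchy–Schwarz and the weighted
AM–GM inequality for the three quantities `t^r |∇u|^p`, `|∇u|^p`, `|∇v|^p` bound the first term
below by `(r/p)(|∇u|^p - |∇v|^p)`; symmetrically the second is at least
`(r/p)(|∇v|^p - |∇u|^p)`.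
-/

section Gradient

variable {E : Type*} [NormedAddCommGroup E] [InnerProductSpace ℝ E] [CompleteSpace E]
  {f g : E → ℝ} {f' g' x : E}

theorem HasGradientAt.sub (hf : HasGradientAt f f' x) (hg : HasGradientAt g g' x) :
    HasGradientAt (fun y => f y - g y) (f' - g') x := by
  rw [hasGradientAt_iff_hasFDerivAt, map_sub]
  exact (hasGradientAt_iff_hasFDerivAt.mp hf).sub (hasGradientAt_iff_hasFDerivAt.mp hg)

theorem HasGradientAt.mul (hf : HasGradientAt f f' x) (hg : HasGradientAt g g' x) :
    HasGradientAt (fun y => f y * g y) (f x • g' + g x • f') x := by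
  rw [hasGradientAt_iff_hasFDerivAt, map_add, _root_.map_smul, _root_.map_smul]
  exact (hasGradientAt_iff_hasFDerivAt.mp hf).mul (hasGradientAt_iff_hasFDerivAt.mp hg)

theorem HasGradientAt.rpow_const {q : ℝ} (hf : HasGradientAt f f' x) (hfx : f x ≠ 0 ∨ 1 ≤ q) :
    HasGradientAt (fun y => f y ^ q) ((q * f x ^ (q - 1)) • f') x := by
  rw [hasGradientAt_iff_hasFDerivAt, _root_.map_smul]
  exact (hasGradientAt_iff_hasFDerivAt.mp hf).rpow_const hfx

theorem hasGradientAt_rpow_sub_rpow_div (r : ℝ) (hf : HasGradientAt f f' x)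
    (hg : HasGradientAt g g' x) (hfx : 0 < f x) (hgx : 0 < g x) :
    HasGradientAt (fun y => (f y ^ r - g y ^ r) / f y ^ (r - 1))
      ((1 + (r - 1) * (g x / f x) ^ r) • f' - (r * (g x / f x) ^ (r - 1)) • g') x := by
  have hpos : ∀ᶠ y in nhds x, 0 < f y :=
    hf.differentiableAt.continuousAt.eventually (eventually_gt_nhds hfx)
  have hfun : (fun y => (f y ^ r - g y ^ r) / f y ^ (r - 1))
      =ᶠ[nhds x] fun y => f y - g y ^ r * f y ^ (1 - r) := by
    filter_upwards [hpos] with y hy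
    rw [sub_div, ← Real.rpow_sub hy, sub_sub_cancel, Real.rpow_one, div_eq_mul_inv,
      ← Real.rpow_neg hy.le, neg_sub]
  have hcoef₁ : g x ^ r * ((1 - r) * f x ^ (1 - r - 1)) = (1 - r) * (g x / f x) ^ r := by
    rw [Real.div_rpow hgx.le hfx.le, show 1 - r - 1 = -r by ring, Real.rpow_neg hfx.le]
    ring
  have hcoef₂ : f x ^ (1 - r) * (r * g x ^ (r - 1)) = r * (g x / f x) ^ (r - 1) := by
    rw [Real.div_rpow hgx.le hfx.le, show 1 - r = -(r - 1) by ring, Real.rpow_neg hfx.le]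
    ring
  have hderiv := hf.sub ((hg.rpow_const (q := r) (Or.inl hgx.ne')).mul
    (hf.rpow_const (q := 1 - r) (Or.inl hfx.ne')))
  convert hderiv.congr_of_eventuallyEq hfun using 1
  rw [smul_smul, smul_smul, hcoef₁, hcoef₂]
  module

end Gradient

theorem three_term_young {p r t ξ η : ℝ} (hr : 1 < r) (hrp : r ≤ p) (ht : 0 ≤ t) (hξ : 0 ≤ ξ)
    (hη : 0 ≤ η) :
    r * t ^ (r - 1) * ξ ^ (p - 1) * η ≤
      (r - 1) * t ^ r * ξ ^ p + (p - r) / p * ξ ^ p + r / p * η ^ p := by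
  have hr0 : 0 < r := by linarith
  have hp0 : 0 < p := by linarith
  have hamgm := Real.geom_mean_le_arith_mean3_weighted (w₁ := (r - 1) / r)
    (w₂ := (p - r) / (p * r)) (w₃ := 1 / p) (p₁ := t ^ r * ξ ^ p) (p₂ := ξ ^ p) (p₃ := η ^ p)
    (div_nonneg (by linarith) hr0.le) (div_nonneg (by linarith) (by positivity)) (by positivity)
    (by positivity) (by positivity) (by positivity) (by field_simp; ring)
  have hgeom : (t ^ r * ξ ^ p) ^ ((r - 1) / r) * (ξ ^ p) ^ ((p - r) / (p * r)) *
      (η ^ p) ^ (1 / p) = t ^ (r - 1) * ξ ^ (p - 1) * η := by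
    have hexp : p * ((r - 1) / r) + p * ((p - r) / (p * r)) = p - 1 := by field_simp; ring
    rw [Real.mul_rpow (by positivity) (by positivity), ← Real.rpow_mul ht, ← Real.rpow_mul hξ,
      ← Real.rpow_mul hξ, ← Real.rpow_mul hη, mul_assoc (t ^ _),
      ← Real.rpow_add' hξ (by linarith), hexp, mul_div_cancel₀ _ hr0.ne',
      mul_one_div_cancel hp0.ne', Real.rpow_one]
  rw [hgeom] at hamgm
  calc r * t ^ (r - 1) * ξ ^ (p - 1) * η = r * (t ^ (r - 1) * ξ ^ (p - 1) * η) := by ring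
    _ ≤ r * ((r - 1) / r * (t ^ r * ξ ^ p) + (p - r) / (p * r) * ξ ^ p + 1 / p * η ^ p) :=
      mul_le_mul_of_nonneg_left hamgm hr0.le
    _ = _ := by field_simp

theorem le_inner_vecPow {N : ℕ} {p r t : ℝ} (hr : 1 < r) (hrp : r ≤ p) (ht : 0 ≤ t)
    (X Y : Euc N) :
    r / p * ‖X‖ ^ p - r / p * ‖Y‖ ^ p ≤
      ⟪vecPow p X, (1 + (r - 1) * t ^ r) • X - (r * t ^ (r - 1)) • Y⟫ := by
  have hp1 : 1 < p := by linarith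
  have hX := norm_nonneg X
  have hpow₁ : ‖X‖ ^ (p - 1) = ‖X‖ ^ (p - 2) * ‖X‖ := by
    rw [← Real.rpow_add_one' hX (by linarith)]; ring_nf
  have hpow : ‖X‖ ^ p = ‖X‖ ^ (p - 1) * ‖X‖ := by
    rw [← Real.rpow_add_one' hX (by linarith)]; ring_nf
  have hinner : ⟪vecPow p X, (1 + (r - 1) * t ^ r) • X - (r * t ^ (r - 1)) • Y⟫ =
      (1 + (r - 1) * t ^ r) * ‖X‖ ^ p - r * t ^ (r - 1) * (‖X‖ ^ (p - 2) * ⟪X, Y⟫) := by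
    rw [vecPow, inner_sub_right, real_inner_smul_left, real_inner_smul_left,
      real_inner_smul_right, real_inner_smul_right, real_inner_self_eq_norm_mul_norm, hpow, hpow₁]
    ring
  have hcs : ‖X‖ ^ (p - 2) * ⟪X, Y⟫ ≤ ‖X‖ ^ (p - 1) * ‖Y‖ := by
    rw [hpow₁, mul_assoc]
    exact mul_le_mul_of_nonneg_left (real_inner_le_norm X Y) (by positivity)
  have hyoung := three_term_young hr hrp ht hX (norm_nonneg Y)
  have hcoef : 0 ≤ r * t ^ (r - 1) := by positivity
  have hsplit : ‖X‖ ^ p = r / p * ‖X‖ ^ p + (p - r) / p * ‖X‖ ^ p := by field_simp; ring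
  rw [hinner]
  linarith [mul_le_mul_of_nonneg_left hcs hcoef]

theorem local_picone_general {N : ℕ} (Ω : Set (Euc N))
    (p r : ℝ) (hr1 : 1 < r) (hrp : r ≤ p)
    (u v : Euc N → ℝ)
    (hu : ∀ x ∈ Ω, DifferentiableAt ℝ u x) (hv : ∀ x ∈ Ω, DifferentiableAt ℝ v x)
    (hupos : ∀ x ∈ Ω, 0 < u x) (hvpos : ∀ x ∈ Ω, 0 < v x) :
    ∀ x ∈ Ω,
      0 ≤ ⟪vecPow p (gradient u x),
            gradient (fun z => (u z ^ r - v z ^ r) / u z ^ (r - 1)) x⟫ +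
          ⟪vecPow p (gradient v x),
            gradient (fun z => (v z ^ r - u z ^ r) / v z ^ (r - 1)) x⟫ := by
  intro x hx
  have hux := hupos x hx
  have hvx := hvpos x hx
  have hgu := (hu x hx).hasGradientAt
  have hgv := (hv x hx).hasGradientAt
  rw [(hasGradientAt_rpow_sub_rpow_div r hgu hgv hux hvx).gradient,
    (hasGradientAt_rpow_sub_rpow_div r hgv hgu hvx hux).gradient]
  linarith [le_inner_vecPow hr1 hrp (div_pos hvx hux).le (gradient u x) (gradient v x),
    le_inner_vecPow hr1 hrp (div_pos hux hvx).le (gradient v x) (gradient u x)]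

/-- Local Picone-type inequality (Lemma `Lemma3` of the paper): for `1 < p < ∞`,
`1 < r ≤ p` and any two positive differentiable functions `u, v` on an open set
`Ω ⊆ ℝ^N`, the pointwise inequality
`[∇u]^{p-1} · ∇((u^r - v^r)/u^{r-1}) + [∇v]^{p-1} · ∇((v^r - u^r)/v^{r-1}) ≥ 0`
holds for all `x ∈ Ω`. -/
theorem local_picone {N : ℕ} (Ω : Set (Euc N)) (hΩ : IsOpen Ω)
    (p r : ℝ) (hp1 : 1 < p) (hr1 : 1 < r) (hrp : r ≤ p)
    (u v : Euc N → ℝ)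
    (hu : ∀ x ∈ Ω, DifferentiableAt ℝ u x) (hv : ∀ x ∈ Ω, DifferentiableAt ℝ v x)
    (hupos : ∀ x ∈ Ω, 0 < u x) (hvpos : ∀ x ∈ Ω, 0 < v x) :
    ∀ x ∈ Ω,
      0 ≤ ⟪vecPow p (gradient u x),
            gradient (fun z => (u z ^ r - v z ^ r) / u z ^ (r - 1)) x⟫ +
          ⟪vecPow p (gradient v x),
            gradient (fun z => (v z ^ r - u z ^ r) / v z ^ (r - 1)) x⟫ :=
  local_picone_general Ω p r hr1 hrp u v hu hv hupos hvpos
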